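/- The function x ↦ √((π√2)/(4x) + 1 + √2) is interval-integrable on (0, π/4), and the quantity v₁ := −√(1 + 2√2) + (1/2)·∫ from 0 to π/4 of √((π√2)/(4x) + 1 + √2) dx satisfies v₁ < −0.79. In particular v₁ < 0, so in the Newtonian planar dihedral problem the right unstable branch of W^u(c₋) reaches the double-collision arm θ = π/2 with a negative value of v. -/
import Mathlib

open Real MeasureTheory

private lemma sqrt_add_le_aux {u v : ℝ} (hu : 0 ≤ u) (hv : 0 ≤ v) :
    Real.sqrt (u + v) ≤ Real.sqrt u + Real.sqrt v := by
  have h1 := Real.sq_sqrt hu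
  have h2 := Real.sq_sqrt hv
  have h3 := Real.sqrt_nonneg u
  have h4 := Real.sqrt_nonneg v
  calc Real.sqrt (u + v) ≤ Real.sqrt ((Real.sqrt u + Real.sqrt v) ^ 2) := by
        apply Real.sqrt_le_sqrt
        nlinarith [mul_nonneg h3 h4]
    _ = Real.sqrt u + Real.sqrt v := Real.sqrt_sq (by positivity)

private lemma integrable_aux {a c b : ℝ} (ha : 0 ≤ a) (hc : 0 ≤ c) (hb : 0 ≤ b) :
    IntervalIntegrable (fun x : ℝ => Real.sqrt (a / x + c)) volume 0 b := by
  have hg : IntervalIntegrable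
      (fun x : ℝ => Real.sqrt a * x ^ (-(1/2) : ℝ) + Real.sqrt c) volume 0 b :=
    ((intervalIntegral.intervalIntegrable_rpow' (by norm_num)).const_mul _).add
      intervalIntegrable_const
  refine hg.mono_fun' ?_ ?_
  · exact (Measurable.sqrt ((measurable_const.div measurable_id).add_const _)).aestronglyMeasurable
  · filter_upwards [MeasureTheory.ae_restrict_mem measurableSet_uIoc] with x hx
    rw [Set.uIoc_of_le hb] at hx
    have hx0 : 0 < x := hx.1
    have h1 : Real.sqrt (a / x + c) ≤ Real.sqrt (a / x) + Real.sqrt c :=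
      sqrt_add_le_aux (by positivity) hc
    have h2 : Real.sqrt (a / x) = Real.sqrt a * x ^ (-(1/2) : ℝ) := by
      rw [Real.sqrt_div ha, Real.rpow_neg hx0.le, ← Real.sqrt_eq_rpow, div_eq_mul_inv]
    rw [Real.norm_of_nonneg (Real.sqrt_nonneg _)]
    rw [h2] at h1
    exact h1

private lemma ftc_aux {a c b : ℝ} (ha : 0 < a) (hc : 0 < c) (hb : 0 < b) :
    ∫ x in (0:ℝ)..b, Real.sqrt (a / x + c)
      = Real.sqrt (c * b ^ 2 + a * b)
        + (a / Real.sqrt c) * Real.arsinh (Real.sqrt (c / a) * Real.sqrt b) := by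
  set H : ℝ → ℝ := fun x =>
    Real.sqrt (c * x ^ 2 + a * x)
      + (a / Real.sqrt c) * Real.arsinh (Real.sqrt (c / a) * Real.sqrt x) with hH
  have hcont : ContinuousOn H (Set.Icc 0 b) := by
    have h1 : Continuous fun x : ℝ => Real.sqrt (c * x ^ 2 + a * x) :=
      Real.continuous_sqrt.comp (by continuity)
    have h2 : Continuous fun x : ℝ => Real.arsinh (Real.sqrt (c / a) * Real.sqrt x) :=
      Real.continuous_arsinh.comp (continuous_const.mul Real.continuous_sqrt)
    exact (h1.add (continuous_const.mul h2)).continuousOn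
  have hderiv : ∀ x ∈ Set.Ioo (0:ℝ) b,
      HasDerivWithinAt H (Real.sqrt (a / x + c)) (Set.Ioi x) x := by
    intro x hx
    have hx0 : 0 < x := hx.1
    have hp : (0:ℝ) < c * x ^ 2 + a * x := by positivity
    have d1 : HasDerivAt (fun y : ℝ => c * y ^ 2 + a * y) (2 * c * x + a) x := by
      have h1 : HasDerivAt (fun y : ℝ => c * y ^ 2) (c * (2 * x)) x := by
        simpa using (hasDerivAt_pow 2 x).const_mul c
      have h2 : HasDerivAt (fun y : ℝ => a * y) a x := by
        simpa using (hasDerivAt_id x).const_mul a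
      exact (h1.add h2).congr_deriv (by ring)
    have d2 := d1.sqrt hp.ne'
    have d3 : HasDerivAt (fun y : ℝ => Real.sqrt (c / a) * Real.sqrt y)
        (Real.sqrt (c / a) * (1 / (2 * Real.sqrt x))) x :=
      (Real.hasDerivAt_sqrt hx0.ne').const_mul _
    have d4 := (Real.hasDerivAt_arsinh (Real.sqrt (c / a) * Real.sqrt x)).comp x d3
    have d5 := d4.const_mul (a / Real.sqrt c)
    have D := d2.add d5
    have hs : Real.sqrt x ^ 2 = x := Real.sq_sqrt hx0.le
    have hq : Real.sqrt a ^ 2 = a := Real.sq_sqrt ha.le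
    have hr : Real.sqrt c ^ 2 = c := Real.sq_sqrt hc.le
    have hs0 : 0 < Real.sqrt x := Real.sqrt_pos.2 hx0
    have hq0 : 0 < Real.sqrt a := Real.sqrt_pos.2 ha
    have hr0 : 0 < Real.sqrt c := Real.sqrt_pos.2 hc
    have hpx : (0:ℝ) < a + c * x := by positivity
    have hp2 : Real.sqrt (a + c * x) ^ 2 = a + c * x := Real.sq_sqrt hpx.le
    have hp0 : 0 < Real.sqrt (a + c * x) := Real.sqrt_pos.2 hpx
    have e1 : Real.sqrt (c * x ^ 2 + a * x) = Real.sqrt x * Real.sqrt (a + c * x) := by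
      rw [show c * x ^ 2 + a * x = x * (a + c * x) by ring, Real.sqrt_mul hx0.le]
    have e3 : Real.sqrt (1 + (Real.sqrt (c / a) * Real.sqrt x) ^ 2)
        = Real.sqrt (a + c * x) / Real.sqrt a := by
      rw [mul_pow, hs, Real.sq_sqrt (le_of_lt (div_pos hc ha)),
        show 1 + c / a * x = (a + c * x) / a by field_simp,
        Real.sqrt_div hpx.le]
    have e4 : Real.sqrt (a / x + c) = Real.sqrt (a + c * x) / Real.sqrt x := by
      rw [show a / x + c = (a + c * x) / x by field_simp, Real.sqrt_div hpx.le]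
    have hw : Real.sqrt (c / a) * Real.sqrt a = Real.sqrt c := by
      rw [← Real.sqrt_mul (le_of_lt (div_pos hc ha)) a]
      congr 1
      field_simp
    have key : (a / Real.sqrt c)
        * ((Real.sqrt (a + c * x) / Real.sqrt a)⁻¹
          * (Real.sqrt (c / a) * (1 / (2 * Real.sqrt x))))
        = a / (2 * Real.sqrt x * Real.sqrt (a + c * x)) := by
      rw [inv_div, show Real.sqrt a / Real.sqrt (a + c * x)
          * (Real.sqrt (c / a) * (1 / (2 * Real.sqrt x)))
        = (Real.sqrt (c / a) * Real.sqrt a)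
          * (1 / (Real.sqrt (a + c * x) * (2 * Real.sqrt x))) by ring, hw]
      field_simp
      try ring
      try tauto
    have heq : (2 * c * x + a) / (2 * Real.sqrt (c * x ^ 2 + a * x))
        + (a / Real.sqrt c)
          * ((Real.sqrt (1 + (Real.sqrt (c / a) * Real.sqrt x) ^ 2))⁻¹
            * (Real.sqrt (c / a) * (1 / (2 * Real.sqrt x))))
        = Real.sqrt (a / x + c) := by
      rw [e1, e3, e4, key]
      rw [div_add_div _ _ (by positivity : (2 * (Real.sqrt x * Real.sqrt (a + c * x)) : ℝ) ≠ 0)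
          (by positivity : (2 * Real.sqrt x * Real.sqrt (a + c * x) : ℝ) ≠ 0),
        div_eq_div_iff (by positivity) (ne_of_gt hs0)]
      linear_combination (-4 * Real.sqrt x ^ 2 * Real.sqrt (a + c * x)) * hp2
    have D' : HasDerivAt H (Real.sqrt (a / x + c)) x := by
      rw [hH]
      exact D.congr_deriv heq
    exact D'.hasDerivWithinAt
  have hint : IntervalIntegrable (fun x : ℝ => Real.sqrt (a / x + c)) volume 0 b :=
    integrable_aux ha.le hc.le hb.le
  have hFTC := intervalIntegral.integral_eq_sub_of_hasDeriv_right_of_le hb.le hcont hderiv hint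
  rw [hFTC, hH]
  simp

private lemma numeric_aux {T1 T2 T3 L : ℝ}
    (h1 : T1 < 1.5372) (h2 : 0 ≤ T2) (h2' : T2 < 0.714857)
    (h3 : 0 ≤ T3) (h3' : T3 < 1.09) (hL : 1.95663 < L) :
    -L + (1/2) * (T1 + T2 * T3) < -0.79 := by
  nlinarith

set_option maxHeartbeats 1000000 in
theorem newtonian_planar_v_at_collision_neg :
    IntervalIntegrable (fun x : ℝ => Real.sqrt (π * Real.sqrt 2 / (4 * x) + 1 + Real.sqrt 2))
      volume 0 (π/4) ∧
    -Real.sqrt (1 + 2 * Real.sqrt 2) +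
      (1/2) * ∫ x in (0:ℝ)..(π/4), Real.sqrt (π * Real.sqrt 2 / (4 * x) + 1 + Real.sqrt 2)
      < -0.79 := by
  have hs2lo : (1.414213 : ℝ) < Real.sqrt 2 := Real.lt_sqrt_of_sq_lt (by norm_num)
  have hs2hi : Real.sqrt 2 < 1.414214 := by
    rw [Real.sqrt_lt' (by norm_num)]; norm_num
  have hs2pos : (0:ℝ) < Real.sqrt 2 := by linarith
  have hpi_lo : (3.141592 : ℝ) < π := by linarith [Real.pi_gt_d6]
  have hpi_hi : π < 3.141593 := by linarith [Real.pi_lt_d6]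
  have ha : (0:ℝ) < π * Real.sqrt 2 / 4 := by positivity
  have hc : (0:ℝ) < 1 + Real.sqrt 2 := by positivity
  have hb : (0:ℝ) < π / 4 := by positivity
  have hfun : (fun x : ℝ => Real.sqrt (π * Real.sqrt 2 / (4 * x) + 1 + Real.sqrt 2))
      = fun x : ℝ => Real.sqrt ((π * Real.sqrt 2 / 4) / x + (1 + Real.sqrt 2)) := by
    funext x
    rw [div_div, add_assoc]
  have hInt : IntervalIntegrable
      (fun x : ℝ => Real.sqrt (π * Real.sqrt 2 / (4 * x) + 1 + Real.sqrt 2))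
      volume 0 (π/4) := by
    rw [hfun]
    exact integrable_aux ha.le hc.le hb.le
  refine ⟨hInt, ?_⟩
  have hIeq : (∫ x in (0:ℝ)..(π/4), Real.sqrt (π * Real.sqrt 2 / (4 * x) + 1 + Real.sqrt 2))
      = Real.sqrt ((1 + Real.sqrt 2) * (π/4) ^ 2 + (π * Real.sqrt 2 / 4) * (π/4))
        + ((π * Real.sqrt 2 / 4) / Real.sqrt (1 + Real.sqrt 2))
          * Real.arsinh (Real.sqrt ((1 + Real.sqrt 2) / (π * Real.sqrt 2 / 4))
            * Real.sqrt (π/4)) := by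
    rw [hfun]
    exact ftc_aux ha hc hb
  rw [hIeq]
  clear hIeq hfun hInt
  -- numerical bounds
  have ha_hi : π * Real.sqrt 2 / 4 < 1.1107213 := by
    nlinarith [mul_pos (sub_pos.2 hpi_hi) hs2pos]
  have hT1 : Real.sqrt ((1 + Real.sqrt 2) * (π/4) ^ 2 + (π * Real.sqrt 2 / 4) * (π/4))
      < 1.5372 := by
    rw [Real.sqrt_lt' (by norm_num)]
    have hpi2 : π ^ 2 < 9.8696066 := by
      nlinarith [mul_pos (sub_pos.2 hpi_hi) (show (0:ℝ) < 3.141593 + π by positivity)]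
    have h28 : 1 + 2 * Real.sqrt 2 < 3.828428 := by linarith
    nlinarith [mul_pos (sub_pos.2 hpi2) (show (0:ℝ) < 1 + 2 * Real.sqrt 2 by positivity),
      mul_pos (show (0:ℝ) < 9.8696066 by norm_num) (sub_pos.2 h28)]
  have hsc_lo : (1.553769 : ℝ) < Real.sqrt (1 + Real.sqrt 2) :=
    Real.lt_sqrt_of_sq_lt (by nlinarith)
  have hsc_pos : (0:ℝ) < Real.sqrt (1 + Real.sqrt 2) := by linarith
  have hT2 : (π * Real.sqrt 2 / 4) / Real.sqrt (1 + Real.sqrt 2) < 0.714857 := by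
    rw [div_lt_iff₀ hsc_pos]
    nlinarith [hsc_lo, ha_hi]
  have hT2' : 0 ≤ (π * Real.sqrt 2 / 4) / Real.sqrt (1 + Real.sqrt 2) := by positivity
  -- bound on u := sqrt(c/a) * sqrt b
  have hu_nonneg : 0 ≤ Real.sqrt ((1 + Real.sqrt 2) / (π * Real.sqrt 2 / 4)) * Real.sqrt (π/4) :=
    by positivity
  have hu_sq : (Real.sqrt ((1 + Real.sqrt 2) / (π * Real.sqrt 2 / 4)) * Real.sqrt (π/4)) ^ 2
      = (1 + Real.sqrt 2) / Real.sqrt 2 := by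
    rw [mul_pow, Real.sq_sqrt (le_of_lt (div_pos hc ha)), Real.sq_sqrt hb.le]
    have hπ : π ≠ 0 := by positivity
    field_simp
  have hu_sq_hi : (Real.sqrt ((1 + Real.sqrt 2) / (π * Real.sqrt 2 / 4)) * Real.sqrt (π/4)) ^ 2
      < 1.70710714 := by
    rw [hu_sq, div_lt_iff₀ hs2pos]
    nlinarith [hs2lo, hs2hi]
  have hu_hi : Real.sqrt ((1 + Real.sqrt 2) / (π * Real.sqrt 2 / 4)) * Real.sqrt (π/4)
      < 1.30657 := by
    nlinarith [hu_sq_hi, hu_nonneg,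
      sq_nonneg (Real.sqrt ((1 + Real.sqrt 2) / (π * Real.sqrt 2 / 4)) * Real.sqrt (π/4)
        - 1.30657)]
  have hsu : Real.sqrt (1 + (Real.sqrt ((1 + Real.sqrt 2) / (π * Real.sqrt 2 / 4))
      * Real.sqrt (π/4)) ^ 2) < 1.645334 := by
    rw [Real.sqrt_lt' (by norm_num)]
    nlinarith
  have harsinh : Real.arsinh (Real.sqrt ((1 + Real.sqrt 2) / (π * Real.sqrt 2 / 4))
      * Real.sqrt (π/4)) < 1.09 := by
    rw [Real.arsinh, Real.log_lt_iff_lt_exp (by positivity)]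
    have h1 : Real.exp (1.09 : ℝ) = Real.exp 1 * Real.exp 0.09 := by
      rw [← Real.exp_add]; norm_num
    have h2 : (1.09 : ℝ) ≤ Real.exp 0.09 := by
      have := Real.add_one_le_exp (0.09 : ℝ)
      linarith
    have h3 : (2.7182818283 : ℝ) < Real.exp 1 := by
      have := Real.exp_one_gt_d9
      linarith
    have h4 : (0:ℝ) < Real.exp 0.09 := Real.exp_pos _
    have hexp : (2.9629271 : ℝ) < Real.exp 1.09 := by
      rw [h1]; nlinarith
    linarith
  have harsinh_nonneg : 0 ≤ Real.arsinh (Real.sqrt ((1 + Real.sqrt 2) / (π * Real.sqrt 2 / 4))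
      * Real.sqrt (π/4)) := Real.arsinh_nonneg_iff.2 hu_nonneg
  have hL : (1.95663 : ℝ) < Real.sqrt (1 + 2 * Real.sqrt 2) :=
    Real.lt_sqrt_of_sq_lt (by nlinarith)
  exact numeric_aux hT1 hT2' hT2 harsinh_nonneg harsinh hL
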